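/- Let (H₋, H₊, Γ₋, Γ₊) be a boundary quadruple for a densely defined skew-symmetric operator A₀ on a Hilbert space V, with A = (−A₀)*. If Γ₊ = 0, then A is m-dissipative and A is the only m-dissipative extension of A₀: every m-dissipative operator B with A₀ ⊆ B equals A. -/

import Mathlib

variable {𝕜 V : Type*} [RCLike 𝕜] [NormedAddCommGroup V] [InnerProductSpace 𝕜 V]
  [CompleteSpace V]

/-- An operator `A` on `V` is *skew-symmetric* if `⟪Au, v⟫ + ⟪u, Av⟫ = 0` for all
`u, v ∈ D(A)`. -/
def SkewSymmetric (A : V →ₗ.[𝕜] V) : Prop :=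
  ∀ u v : A.domain, @inner 𝕜 _ _ (A u) (v : V) + @inner 𝕜 _ _ (u : V) (A v) = 0

/-- A *boundary quadruple* `(H₋, H₊, Γ₋, Γ₊)` for a densely defined skew-symmetric operator
`A₀` (here expressed via `A := (-A₀)*`) consists of pre-Hilbert spaces `H₋, H₊` and surjective
linear maps `Γ₋ : D(A) → H₋`, `Γ₊ : D(A) → H₊` such that
`⟪Au, v⟫ + ⟪u, Av⟫ = ⟪Γ₊u, Γ₊v⟫ - ⟪Γ₋u, Γ₋v⟫` for all `u, v ∈ D(A)` and
`ker Γ₋ + ker Γ₊ = D(A)`. -/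
def IsBoundaryQuadruple (A : V →ₗ.[𝕜] V) {Hm Hp : Type*}
    [NormedAddCommGroup Hm] [InnerProductSpace 𝕜 Hm]
    [NormedAddCommGroup Hp] [InnerProductSpace 𝕜 Hp]
    (Γm : A.domain →ₗ[𝕜] Hm) (Γp : A.domain →ₗ[𝕜] Hp) : Prop :=
  Function.Surjective Γm ∧ Function.Surjective Γp ∧
    (∀ u v : A.domain,
      @inner 𝕜 _ _ (A u) (v : V) + @inner 𝕜 _ _ (u : V) (A v) =
        @inner 𝕜 _ _ (Γp u) (Γp v) - @inner 𝕜 _ _ (Γm u) (Γm v)) ∧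
    LinearMap.ker Γm ⊔ LinearMap.ker Γp = ⊤

/-- An operator `A` on `V` is *dissipative* if `Re ⟪Ax, x⟫ ≤ 0` for all `x ∈ D(A)`. -/
def Dissipative (A : V →ₗ.[𝕜] V) : Prop :=
  ∀ x : A.domain, RCLike.re (@inner 𝕜 _ _ (A x) (x : V)) ≤ 0

/-- `A` is *m-dissipative* if it is dissipative and `(Id - A) D(A) = V`. -/
def MDissipative (A : V →ₗ.[𝕜] V) : Prop :=
  Dissipative A ∧ ∀ y : V, ∃ x : A.domain, (x : V) - A x = y

set_option maxHeartbeats 1000000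
open RCLike LinearPMap

set_option linter.unusedSectionVars false in
private lemma diss_norm_le {C : V →ₗ.[𝕜] V} (h : Dissipative C) (x : C.domain) :
    ‖(x : V)‖ ≤ ‖(x : V) - C x‖ := by
  have h1 : ‖(x:V) - C x‖ ^ 2 = ‖(x:V)‖ ^ 2 - 2 * re (@inner 𝕜 _ _ ((x:V)) (C x)) + ‖C x‖ ^ 2 :=
    norm_sub_sq _ _
  have h2 : re (@inner 𝕜 _ _ ((x:V)) (C x)) = re (@inner 𝕜 _ _ (C x) ((x:V))) := inner_re_symm _ _
  have h3 := h x
  have h4 : ‖(x:V)‖ ^ 2 ≤ ‖(x:V) - C x‖ ^ 2 := by nlinarith [sq_nonneg ‖C x‖]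
  exact (abs_le_of_sq_le_sq' h4 (norm_nonneg _)).2

/-- If `Γ₊ = 0`, then `A = (-A₀)*` is the unique m-dissipative extension of `A₀`. -/
theorem unique_mDissipative_extension_of_gammaPlus_eq_zero {Hm Hp : Type*}
    [NormedAddCommGroup Hm] [InnerProductSpace 𝕜 Hm]
    [NormedAddCommGroup Hp] [InnerProductSpace 𝕜 Hp]
    (A₀ : V →ₗ.[𝕜] V) (hdense : Dense (A₀.domain : Set V)) (hskew : SkewSymmetric A₀)
    (Γm : ((-A₀).adjoint).domain →ₗ[𝕜] Hm) (Γp : ((-A₀).adjoint).domain →ₗ[𝕜] Hp)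
    (hq : IsBoundaryQuadruple (-A₀).adjoint Γm Γp)
    (hΓp : Γp = 0) :
    MDissipative (-A₀).adjoint ∧
      ∀ B : V →ₗ.[𝕜] V, A₀ ≤ B → MDissipative B → B = (-A₀).adjoint := by
  classical
  obtain ⟨hΓmsurj, -, hbdry0, -⟩ := hq
  have hdT : Dense (((-A₀).domain : Submodule 𝕜 V) : Set V) := hdense
  -- the boundary identity with Γp = 0
  have hbdry : ∀ u v : ((-A₀).adjoint).domain,
      (@inner 𝕜 _ _ ((-A₀).adjoint u) (v : V)) + @inner 𝕜 _ _ (u : V) ((-A₀).adjoint v)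
        = -(@inner 𝕜 _ _ (Γm u) (Γm v)) := by
    intro u v
    have h := hbdry0 u v
    rw [hΓp] at h
    simpa using h
  -- membership helper
  have hmem : ∀ (y z : V),
      (∀ u : (-A₀).domain, (@inner 𝕜 _ _ z ((u : V))) = @inner 𝕜 _ _ y ((-A₀) u)) →
      ∃ hy : y ∈ ((-A₀).adjoint).domain, (-A₀).adjoint ⟨y, hy⟩ = z := by
    intro y z h
    have hy : y ∈ ((-A₀).adjoint).domain :=
      mem_adjoint_domain_of_exists _ ⟨z, h⟩
    exact ⟨hy, adjoint_apply_eq hdT ⟨y, hy⟩ h⟩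
  have hfa := (-A₀).adjoint_isFormalAdjoint hdT
  -- A₀ ≤ A
  have hA₀A : A₀ ≤ (-A₀).adjoint := by
    refine IsFormalAdjoint.le_adjoint (hT := hdT) ?_
    intro x y
    rw [LinearPMap.neg_apply, inner_neg_left]
    exact (eq_neg_of_add_eq_zero_right (hskew x y)).symm
  -- A is dissipative
  have hdiss : Dissipative ((-A₀).adjoint) := by
    intro x
    have h := congrArg re (hbdry x x)
    rw [_root_.map_add, ← inner_conj_symm ((x : V)) ((-A₀).adjoint x), conj_re] at h
    rw [_root_.map_neg, inner_self_eq_norm_sq] at h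
    nlinarith [sq_nonneg ‖Γm x‖]

  -- S x = x - A x
  set S : (((-A₀).adjoint).domain) →ₗ[𝕜] V :=
    ((((-A₀).adjoint).domain).subtype) - (((-A₀).adjoint).toFun) with hS
  have hSapp : ∀ x : ((-A₀).adjoint).domain, S x = (x : V) - (-A₀).adjoint x := by
    intro x; simp [hS, LinearMap.sub_apply]
  -- range of Id - A is closed
  have hRclosed : IsClosed ((LinearMap.range S : Submodule 𝕜 V) : Set V) := by
    refine IsSeqClosed.isClosed ?_
    intro f y hf hfy
    choose g hg using hf
    have hcf : CauchySeq f := hfy.cauchySeq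
    have hcg : CauchySeq (fun n => ((g n : V))) := by
      rw [Metric.cauchySeq_iff] at hcf ⊢
      intro ε hε
      obtain ⟨N, hN⟩ := hcf ε hε
      refine ⟨N, fun m hm n hn => lt_of_le_of_lt ?_ (hN m hm n hn)⟩
      rw [dist_eq_norm, dist_eq_norm, ← hg m, ← hg n, ← _root_.map_sub]
      rw [hSapp (g m - g n)]
      exact diss_norm_le hdiss (g m - g n)
    obtain ⟨x, hx⟩ := cauchySeq_tendsto_of_complete hcg
    have hAg : Filter.Tendsto (fun n => (-A₀).adjoint (g n)) Filter.atTop (nhds (x - y)) := by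
      have heq : ∀ n, (-A₀).adjoint (g n) = ((g n : V)) - f n := by
        intro n; rw [← hg n, hSapp]; abel
      have := hx.sub hfy
      simpa [heq] using this
    have hcond : ∀ u : (-A₀).domain,
        (@inner 𝕜 _ _ (x - y) ((u : V))) = @inner 𝕜 _ _ x ((-A₀) u) := by
      intro u
      have h2 : Filter.Tendsto (fun n => (@inner 𝕜 _ _ ((-A₀).adjoint (g n)) ((u:V))))
          Filter.atTop (nhds (@inner 𝕜 _ _ (x - y) ((u:V)))) :=
        hAg.inner tendsto_const_nhds
      have h3 : Filter.Tendsto (fun n => (@inner 𝕜 _ _ ((g n : V)) ((-A₀) u)))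
          Filter.atTop (nhds (@inner 𝕜 _ _ x ((-A₀) u))) :=
        hx.inner tendsto_const_nhds
      refine tendsto_nhds_unique (h2.congr fun n => ?_) h3
      exact hfa (g n) u
    obtain ⟨hxd, hxv⟩ := hmem x (x - y) hcond
    refine ⟨⟨x, hxd⟩, ?_⟩
    rw [hSapp, hxv]
    abel
  -- range of Id - A is everything
  have hRtop : (LinearMap.range S) = ⊤ := by
    haveI : CompleteSpace (LinearMap.range S : Submodule 𝕜 V) := hRclosed.completeSpace_coe
    rw [← Submodule.orthogonal_eq_bot_iff, Submodule.eq_bot_iff]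
    intro y hy
    have hxy : ∀ x : ((-A₀).adjoint).domain,
        (@inner 𝕜 _ _ ((-A₀).adjoint x) y) = @inner 𝕜 _ _ ((x:V)) y := by
      intro x
      have h := (Submodule.mem_orthogonal _ y).mp hy (S x) (LinearMap.mem_range_self S x)
      rw [hSapp, inner_sub_left, sub_eq_zero] at h
      exact h.symm
    have hcond : ∀ u : (-A₀).domain,
        (@inner 𝕜 _ _ (-y) ((u : V))) = @inner 𝕜 _ _ y ((-A₀) u) := by
      intro u
      have hu' : ((u:V)) ∈ ((-A₀).adjoint).domain := hA₀A.1 u.2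
      have hval : A₀ u = (-A₀).adjoint ⟨(u:V), hu'⟩ := hA₀A.2 rfl
      rw [LinearPMap.neg_apply, inner_neg_right, inner_neg_left]
      congr 1
      rw [hval]
      calc (@inner 𝕜 _ _ y ((u:V)))
          = (starRingEnd 𝕜) (@inner 𝕜 _ _ ((u:V)) y) := (inner_conj_symm _ _).symm
        _ = (starRingEnd 𝕜) (@inner 𝕜 _ _ ((-A₀).adjoint ⟨(u:V), hu'⟩) y) := by
            rw [hxy ⟨(u:V), hu'⟩]
        _ = @inner 𝕜 _ _ y ((-A₀).adjoint ⟨(u:V), hu'⟩) := inner_conj_symm _ _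
    obtain ⟨hyd, hyv⟩ := hmem y (-y) hcond
    have h1 := hxy ⟨y, hyd⟩
    rw [hyv, inner_neg_left] at h1
    have h2 : (2:𝕜) * (@inner 𝕜 _ _ y y) = 0 := by
      linear_combination (-1:𝕜) * h1
    rcases mul_eq_zero.mp h2 with h | h
    · exact absurd h two_ne_zero
    · exact inner_self_eq_zero.mp h
  have hsurj : ∀ y : V, ∃ x : ((-A₀).adjoint).domain, (x:V) - (-A₀).adjoint x = y := by
    intro y
    have hyR : y ∈ LinearMap.range S := by rw [hRtop]; trivial
    obtain ⟨x, hx⟩ := hyR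
    exact ⟨x, by rw [← hSapp]; exact hx⟩
  refine ⟨⟨hdiss, hsurj⟩, ?_⟩
  intro B hA₀B hBm
  have key : ∀ (x : B.domain) (u : A₀.domain),
      re ((@inner 𝕜 _ _ (B x) ((u:V))) + @inner 𝕜 _ _ (A₀ u) ((x:V))) = 0 := by
    intro x u
    have hu' : ((u:V)) ∈ B.domain := hA₀B.1 u.2
    have hBu : B ⟨(u:V), hu'⟩ = A₀ u := (hA₀B.2 rfl).symm
    have hre0 : re (@inner 𝕜 _ _ (A₀ u) ((u:V))) = 0 := by
      have h := congrArg re (hskew u u)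
      rw [_root_.map_add, ← inner_conj_symm ((u:V)) (A₀ u), conj_re, _root_.map_zero] at h
      linarith
    have hquad : ∀ t : ℝ,
        re (@inner 𝕜 _ _ (B x) ((x:V)))
          + t * re ((@inner 𝕜 _ _ (B x) ((u:V))) + @inner 𝕜 _ _ (A₀ u) ((x:V))) ≤ 0 := by
      intro t
      have hw := hBm.1 (x + (t:𝕜) • ⟨(u:V), hu'⟩)
      have hBw : B (x + (t:𝕜) • ⟨(u:V), hu'⟩) = B x + (t:𝕜) • A₀ u := by
        rw [B.map_add, B.map_smul, hBu]
      have hcoe : (((x + (t:𝕜) • (⟨(u:V), hu'⟩ : B.domain) : B.domain)) : V)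
          = (x:V) + (t:𝕜) • (u:V) := rfl
      rw [hBw, hcoe] at hw
      have hexp : (@inner 𝕜 _ _ (B x + (t:𝕜) • A₀ u) ((x:V) + (t:𝕜) • (u:V)))
          = @inner 𝕜 _ _ (B x) ((x:V))
            + (t:𝕜) * ((@inner 𝕜 _ _ (B x) ((u:V))) + @inner 𝕜 _ _ (A₀ u) ((x:V)))
            + ((t^2 : ℝ) : 𝕜) * @inner 𝕜 _ _ (A₀ u) ((u:V)) := by
        simp only [inner_add_left, inner_add_right, inner_smul_left, inner_smul_right,
          RCLike.conj_ofReal]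
        push_cast
        ring
      rw [hexp, _root_.map_add, _root_.map_add, re_ofReal_mul, re_ofReal_mul, hre0,
        mul_zero, add_zero] at hw
      exact hw
    by_contra hne
    set c := re (@inner 𝕜 _ _ (B x) ((x:V))) with hc
    set d := re ((@inner 𝕜 _ _ (B x) ((u:V))) + @inner 𝕜 _ _ (A₀ u) ((x:V))) with hd
    have h := hquad ((1 - c)/d)
    rw [div_mul_cancel₀ _ hne] at h
    linarith
  have main : ∀ (x : B.domain) (u : A₀.domain),
      (@inner 𝕜 _ _ (B x) ((u:V))) = @inner 𝕜 _ _ ((x:V)) ((-A₀) u) := by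
    intro x u
    have h1 := key x u
    have h2 := key x ((RCLike.I : 𝕜) • u)
    have e1 : (@inner 𝕜 _ _ (B x) ((((RCLike.I : 𝕜) • u : A₀.domain) : V)))
        = RCLike.I * @inner 𝕜 _ _ (B x) ((u:V)) := by
      rw [show ((((RCLike.I : 𝕜) • u : A₀.domain)) : V) = (RCLike.I : 𝕜) • (u:V) from rfl,
        inner_smul_right]
    have e2 : (@inner 𝕜 _ _ (A₀ ((RCLike.I : 𝕜) • u)) ((x:V)))
        = -(RCLike.I * @inner 𝕜 _ _ (A₀ u) ((x:V))) := by
      rw [A₀.map_smul, inner_smul_left, RCLike.conj_I]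
      ring
    rw [e1, e2] at h2
    set α := @inner 𝕜 _ _ (B x) ((u:V)) with hα
    set β := @inner 𝕜 _ _ (A₀ u) ((x:V)) with hβ
    have him : im α = im β := by
      have hI : re (RCLike.I * (α - β)) = 0 := by
        rw [mul_sub, sub_eq_add_neg]
        rw [_root_.map_add] at h2 ⊢
        exact h2
      rw [I_mul_re] at hI
      rw [_root_.map_sub] at hI
      linarith
    have hre : re α = - re β := by
      rw [_root_.map_add] at h1
      linarith
    have hconj : (@inner 𝕜 _ _ ((x:V)) (A₀ u)) = (starRingEnd 𝕜) β :=
      (inner_conj_symm ((x:V)) (A₀ u)).symm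
    rw [LinearPMap.neg_apply, inner_neg_right, hconj]
    apply RCLike.ext
    · rw [_root_.map_neg, conj_re]
      exact hre
    · rw [_root_.map_neg, conj_im, neg_neg]
      exact him
  have hBA : B ≤ (-A₀).adjoint := by
    refine ⟨fun v hv => (hmem v (B ⟨v, hv⟩) (fun u => main ⟨v, hv⟩ u)).1, ?_⟩
    intro x y hxy
    obtain ⟨hd, hval⟩ := hmem ((x:V)) (B x) (fun u => main x u)
    have hy : y = (⟨(x:V), hd⟩ : ((-A₀).adjoint).domain) := Subtype.ext hxy.symm
    rw [hy, hval]
  have hAB : (-A₀).adjoint ≤ B := by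
    refine ⟨?_, ?_⟩
    · intro v hv
      set x : ((-A₀).adjoint).domain := ⟨v, hv⟩ with hxdef
      obtain ⟨z, hz⟩ := hBm.2 ((x:V) - (-A₀).adjoint x)
      have hz' : ((z:V)) ∈ ((-A₀).adjoint).domain := hBA.1 z.2
      set z' : ((-A₀).adjoint).domain := ⟨(z:V), hz'⟩ with hz'def
      have hzv : (-A₀).adjoint z' = B z := (hBA.2 rfl).symm
      have hw : ((x - z' : ((-A₀).adjoint).domain) : V) - (-A₀).adjoint (x - z') = 0 := by
        have hcc : ((x - z' : ((-A₀).adjoint).domain) : V) = (x:V) - (z:V) := rfl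
        rw [hcc, LinearPMap.map_sub, hzv]
        rw [sub_sub_sub_comm, hz, sub_self]
      have hle := diss_norm_le hdiss (x - z')
      rw [hw, norm_zero] at hle
      have h0 : ((x - z' : ((-A₀).adjoint).domain) : V) = 0 :=
        norm_eq_zero.mp (le_antisymm hle (norm_nonneg _))
      have hxz : ((x:V)) = (z:V) := by
        have : (x:V) - (z:V) = 0 := h0
        exact sub_eq_zero.mp this
      rw [show v = ((x:V)) from rfl, hxz]
      exact z.2
    · intro x y hxy
      exact (hBA.2 (x := y) (y := x) hxy.symm).symm
  exact le_antisymm hBA hAB
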